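/- Let A be a commutative dg Frobenius algebra of degree n with copairing Δ : s^{−n}A → A ⊗ A, Euler element e = m(Δ(1)), and let 𝒰_A = A[ϑ]/(ϑ²) (dϑ = e) and ℱ_A = (A ⊗ A)[ω]/(ω², (a⊗1)ω − (1⊗a)ω) with dω = Δ(1). Let m̂ : cone(A⊗A → ℱ_A) → cone(A → 𝒰_A) be induced by multiplication A⊗A → A and ω ↦ ϑ, and define φ : cone(A → 𝒰_A) → cone(A⊗A → ℱ_A) by φ(x, y + ϑz) = (Δ(z), (z⊗1)·ω). Then φ is a chain map of A⊗A-modules, and the operator h(x, y + ϑz) = (y, 0) is a chain homotopy between m̂ ∘ φ and the identity of cone(A → 𝒰_A). -/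
import Mathlib


open scoped TensorProduct

/-- Let `A` be a commutative dg Frobenius algebra of degree `n` (even) with
copairing element `Δ(1) = Δ1 ∈ A ⊗ A` and Euler element `e = m(Δ1)`.  With the models
`𝒰_A = A[ϑ]/(ϑ²)` (`dϑ = e`, pairs `(y,z) ↔ y + ϑz`) and
`ℱ_A = (A⊗A)[ω]/(ω², (a⊗1)ω − (1⊗a)ω)` (`dω = Δ1`, pairs `(u,z) ↔ u + ωz`), the map
`m̂ : cone(A⊗A → ℱ_A) → cone(A → 𝒰_A)` induced by the multiplication and `ω ↦ ϑ`, and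
`φ : cone(A → 𝒰_A) → cone(A⊗A → ℱ_A)`, `φ(x, y + ϑz) = (Δ(z), (z⊗1)·ω)`:
`φ` is a chain map of `A⊗A`-modules, and `h(x, y + ϑz) = (y, 0)` is a chain homotopy
between `m̂ ∘ φ` and the identity of `cone(A → 𝒰_A)`. -/
theorem configuration_space_model_homotopy_inverse
    (k : Type*) [CommRing k] (A : Type*) [CommRing A] [Algebra k A]
    (d σ : A →ₗ[k] A)
    (hd2 : ∀ a, d (d a) = 0)
    (hσone : σ 1 = 1)
    (hleib : ∀ a b, d (a * b) = d a * b + σ a * d b)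
    -- differential and sign operator on A ⊗ A
    (dT σT : A ⊗[k] A →ₗ[k] A ⊗[k] A)
    (hdT : dT = TensorProduct.map d LinearMap.id + TensorProduct.map σ d)
    (hσT : σT = TensorProduct.map σ σ)
    (hdTleib : ∀ u v : A ⊗[k] A, dT (u * v) = dT u * v + σT u * dT v)
    -- the copairing: closed, even, and central (Casimir)
    (Δ1 : A ⊗[k] A)
    (hΔclosed : dT Δ1 = 0)
    (hΔeven : σT Δ1 = Δ1)
    (hΔcentral : ∀ a : A, (a ⊗ₜ[k] (1 : A)) * Δ1 = ((1 : A) ⊗ₜ[k] a) * Δ1)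
    -- the Euler element
    (e : A) (he : e = LinearMap.mul' k A Δ1)
    (hde : d e = 0)
    -- the model 𝒰_A of UTM and the model ℱ_A of FM₂, with their differentials
    (DU : (A × A) → (A × A))
    (hDU : ∀ u : A × A, DU u = (d u.1 + e * u.2, - d u.2))
    (DF : ((A ⊗[k] A) × A) → ((A ⊗[k] A) × A))
    (hDF : ∀ w : (A ⊗[k] A) × A,
      DF w = (dT w.1 + Δ1 * (w.2 ⊗ₜ[k] (1 : A)), - d w.2))
    -- the two mapping cones, with cone differential D(x, u) = (dx, ι(x) − D u)
    (DcU : (A × (A × A)) → (A × (A × A)))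
    (hDcU : ∀ w : A × (A × A), DcU w = (d w.1, ((w.1, 0) : A × A) - DU w.2))
    (DcF : ((A ⊗[k] A) × ((A ⊗[k] A) × A)) → ((A ⊗[k] A) × ((A ⊗[k] A) × A)))
    (hDcF : ∀ w : (A ⊗[k] A) × ((A ⊗[k] A) × A),
      DcF w = (dT w.1, ((w.1, 0) : (A ⊗[k] A) × A) - DF w.2))
    -- the maps m̂, φ and the homotopy h
    (mhat : ((A ⊗[k] A) × ((A ⊗[k] A) × A)) → (A × (A × A)))
    (hmhat : ∀ w, mhat w =
      (LinearMap.mul' k A w.1, (LinearMap.mul' k A w.2.1, w.2.2)))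
    (φ : (A × (A × A)) → ((A ⊗[k] A) × ((A ⊗[k] A) × A)))
    (hφ : ∀ w : A × (A × A),
      φ w = (Δ1 * (w.2.2 ⊗ₜ[k] (1 : A)), ((0 : A ⊗[k] A), w.2.2)))
    (h : (A × (A × A)) → (A × (A × A)))
    (hh : ∀ w : A × (A × A), h w = (w.2.1, ((0 : A), (0 : A))))
    -- the A ⊗ A-module structures on the two cones
    (actU : (A ⊗[k] A) → (A × (A × A)) → (A × (A × A)))
    (hactU : ∀ v w, actU v w = (LinearMap.mul' k A v * w.1,
      (LinearMap.mul' k A v * w.2.1, LinearMap.mul' k A v * w.2.2)))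
    (actF : (A ⊗[k] A) → ((A ⊗[k] A) × ((A ⊗[k] A) × A)) →
      ((A ⊗[k] A) × ((A ⊗[k] A) × A)))
    (hactF : ∀ v w, actF v w = (v * w.1, (v * w.2.1, LinearMap.mul' k A v * w.2.2))) :
    -- φ is a chain map
    (∀ w, φ (DcU w) = DcF (φ w)) ∧
    -- φ is a map of A ⊗ A-modules
    (∀ v w, φ (actU v w) = actF v (φ w)) ∧
    -- h is a chain homotopy between m̂ ∘ φ and the identity
    (∀ w, DcU (h w) + h (DcU w) = w - mhat (φ w)) := by

  have hd1 : d (1 : A) = 0 := by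
    have h1 := hleib 1 1
    simp only [mul_one, one_mul, hσone] at h1
    exact add_eq_left.mp h1.symm
  -- multiplication map is multiplicative on simple tensors against z ⊗ 1
  have hmul_tmul : ∀ (u : A ⊗[k] A) (z : A),
      LinearMap.mul' k A (u * (z ⊗ₜ[k] (1 : A))) = LinearMap.mul' k A u * z := by
    intro u z
    induction u using TensorProduct.induction_on with
    | zero => simp
    | tmul a b =>
        simp [Algebra.TensorProduct.tmul_mul_tmul, LinearMap.mul'_apply]
        ring
    | add x y hx hy => simp [add_mul, hx, hy, map_add]
  -- Casimir: v * Δ1 = (μ v ⊗ 1) * Δ1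
  have hcas : ∀ v : A ⊗[k] A,
      v * Δ1 = ((LinearMap.mul' k A v) ⊗ₜ[k] (1 : A)) * Δ1 := by
    intro v
    induction v using TensorProduct.induction_on with
    | zero => simp
    | tmul a b =>
        have : (a ⊗ₜ[k] b) = (a ⊗ₜ[k] (1 : A)) * ((1 : A) ⊗ₜ[k] b) := by
          simp [Algebra.TensorProduct.tmul_mul_tmul]
        rw [this, mul_assoc, ← hΔcentral b, ← mul_assoc]
        simp [Algebra.TensorProduct.tmul_mul_tmul, LinearMap.mul'_apply]
    | add x y hx hy =>
        simp only [add_mul, hx, hy, map_add, TensorProduct.add_tmul]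
  -- d of z ⊗ 1
  have hdz1 : ∀ z : A, dT (z ⊗ₜ[k] (1 : A)) = (d z) ⊗ₜ[k] (1 : A) := by
    intro z
    simp [hdT, hd1]
  refine ⟨?_, ?_, ?_⟩
  · intro w
    obtain ⟨x, y, z⟩ := w
    have key : dT (Δ1 * (z ⊗ₜ[k] (1 : A))) = Δ1 * ((d z) ⊗ₜ[k] (1 : A)) := by
      rw [hdTleib, hΔclosed, hΔeven, hdz1, zero_mul, zero_add]
    simp [hDcU, hDcF, hφ, hDU, hDF, key, Prod.ext_iff]
  · intro v w
    obtain ⟨x, y, z⟩ := w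
    have key : Δ1 * ((LinearMap.mul' k A v * z) ⊗ₜ[k] (1 : A))
        = v * (Δ1 * (z ⊗ₜ[k] (1 : A))) := by
      have h2 : (LinearMap.mul' k A v * z) ⊗ₜ[k] (1 : A)
          = ((LinearMap.mul' k A v) ⊗ₜ[k] (1 : A)) * (z ⊗ₜ[k] (1 : A)) := by
        simp [Algebra.TensorProduct.tmul_mul_tmul]
      calc Δ1 * ((LinearMap.mul' k A v * z) ⊗ₜ[k] (1 : A))
          = ((LinearMap.mul' k A v) ⊗ₜ[k] (1 : A) * Δ1) * (z ⊗ₜ[k] (1 : A)) := by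
            rw [h2]; ring
        _ = (v * Δ1) * (z ⊗ₜ[k] (1 : A)) := by rw [← hcas]
        _ = v * (Δ1 * (z ⊗ₜ[k] (1 : A))) := by ring
    simp [hactU, hactF, hφ, key]
  · intro w
    obtain ⟨x, y, z⟩ := w
    have hmu : LinearMap.mul' k A (Δ1 * (z ⊗ₜ[k] (1 : A))) = e * z := by
      rw [hmul_tmul, he]
    simp [hDcU, hh, hDU, hmhat, hφ, hmu, Prod.ext_iff]
    abel
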